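/- Let G be a connected semi-regular bipartite multigraph with bipartition V₁ ∪ V₂, with |V(G)| ≥ 4 and whose underlying simple graph is not a star K_{1,n−1}. Then λ'(G) is well-defined and λ'(G) ≤ ξ(G). -/

import Mathlib

/-- A multigraph: multiple edges allowed (recorded as edge multiplicities), no loops. -/
structure Multigraph (V : Type*) where
  mult : V → V → ℕ
  symm : ∀ u v, mult u v = mult v u
  loopless : ∀ v, mult v v = 0

namespace Multigraph

variable {V : Type*}

/-- Adjacency: at least one edge between `u` and `v`. -/
def Adj (G : Multigraph V) (u v : V) : Prop := 0 < G.mult u v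

instance (G : Multigraph V) (v : V) : DecidablePred (G.Adj v) :=
  fun u => inferInstanceAs (Decidable (0 < G.mult v u))

/-- Reachability by walks. -/
def Reachable (G : Multigraph V) : V → V → Prop := Relation.ReflTransGen G.Adj

/-- A multigraph is connected if it is nonempty and every two vertices are joined by a walk. -/
def Connected (G : Multigraph V) : Prop := Nonempty V ∧ ∀ u v, G.Reachable u v

/-- An automorphism of a multigraph: a permutation preserving all edge multiplicities. -/
def Aut (G : Multigraph V) : Type _ :=
  {e : Equiv.Perm V // ∀ u v, G.mult (e u) (e v) = G.mult u v}

/-- A set of edges of `G`, given by sub-multiplicities. -/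
structure EdgeSub (G : Multigraph V) where
  f : V → V → ℕ
  symm : ∀ u v, f u v = f v u
  le : ∀ u v, f u v ≤ G.mult u v

/-- The multigraph obtained by deleting the edge set `F`. -/
def deleteEdges (G : Multigraph V) (F : G.EdgeSub) : Multigraph V where
  mult u v := G.mult u v - F.f u v
  symm u v := by try dsimp only
                 rw [G.symm u v, F.symm u v]
  loopless v := by simp [G.loopless v]

/-- `F` is an edge-cut if removing it disconnects `G`. -/
def IsEdgeCut (G : Multigraph V) (F : G.EdgeSub) : Prop := ¬ (G.deleteEdges F).Connected

/-- `F` is a restricted edge-cut if removing it disconnects `G` and leaves no isolated vertex. -/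
def IsRestrictedEdgeCut (G : Multigraph V) (F : G.EdgeSub) : Prop :=
  G.IsEdgeCut F ∧ ∀ v, ∃ u, (G.deleteEdges F).Adj v u

/-- `G` is bipartite with parts `V₁`, `V₂`. -/
def IsBipartition [DecidableEq V] [Fintype V] (G : Multigraph V) (V₁ V₂ : Finset V) : Prop :=
  Disjoint V₁ V₂ ∧ V₁ ∪ V₂ = Finset.univ ∧ ∀ u v, G.Adj u v → (u ∈ V₁ ↔ v ∈ V₂)

/-- A bipartite multigraph is half-transitive if `Aut G` is transitive on each part. -/
def IsHalfTransitive [DecidableEq V] [Fintype V] (G : Multigraph V) (V₁ V₂ : Finset V) : Prop :=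
  G.IsBipartition V₁ V₂ ∧
  (∀ u ∈ V₁, ∀ v ∈ V₁, ∃ e : G.Aut, e.1 u = v) ∧
  (∀ u ∈ V₂, ∀ v ∈ V₂, ∃ e : G.Aut, e.1 u = v)

/-- An imprimitive block for `Aut G`. -/
def IsImprimitiveBlock [DecidableEq V] (G : Multigraph V) (A : Finset V) [Fintype V] : Prop :=
  A.Nonempty ∧ A ≠ Finset.univ ∧
  ∀ e : G.Aut, A.image e.1 = A ∨ Disjoint (A.image e.1) A

/-- The induced sub-multigraph on a vertex set `S`. -/
def induce (G : Multigraph V) (S : Finset V) : Multigraph {x // x ∈ S} where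
  mult a b := G.mult a.1 b.1
  symm a b := G.symm a.1 b.1
  loopless a := G.loopless a.1

section Fin

variable [Fintype V] [DecidableEq V]

/-- The degree of a vertex (counting multiplicities). -/
def degree (G : Multigraph V) (v : V) : ℕ := ∑ u, G.mult v u

/-- The minimum degree `δ(G)`. -/
noncomputable def minDegree (G : Multigraph V) : ℕ := sInf {n | ∃ v, G.degree v = n}

/-- The maximum edge multiplicity `μ(G)`. -/
def maxMult (G : Multigraph V) : ℕ := Finset.univ.sup fun p : V × V => G.mult p.1 p.2

/-- `d(A)`: the number of edges between `A` and its complement. -/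
def cut (G : Multigraph V) (A : Finset V) : ℕ := ∑ u ∈ A, ∑ v ∈ Aᶜ, G.mult u v

/-- The number of edges in an edge set. -/
def EdgeSub.card {G : Multigraph V} (F : G.EdgeSub) : ℕ := (∑ u, ∑ v, F.f u v) / 2

/-- The edge-boundary `N(A)` of a vertex set `A`, as an edge set. -/
def boundary (G : Multigraph V) (A : Finset V) : G.EdgeSub where
  f u v := if (u ∈ A ∧ v ∉ A) ∨ (v ∈ A ∧ u ∉ A) then G.mult u v else 0
  symm u v := by
    try dsimp only
    by_cases h1 : u ∈ A <;> by_cases h2 : v ∈ A <;> simp [h1, h2, G.symm u v]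
  le u v := by (try dsimp only); split_ifs <;> simp

/-- The edge-connectivity `λ(G)`. -/
noncomputable def edgeConn (G : Multigraph V) : ℕ :=
  sInf {n | ∃ F : G.EdgeSub, G.IsEdgeCut F ∧ F.card = n}

/-- The restricted edge-connectivity `λ'(G)`. -/
noncomputable def rEdgeConn (G : Multigraph V) : ℕ :=
  sInf {n | ∃ F : G.EdgeSub, G.IsRestrictedEdgeCut F ∧ F.card = n}

/-- The minimum edge degree `ξ(G) = min {d(u)+d(v)-2μ(uv) : uv ∈ E}`. -/
noncomputable def minEdgeDegree (G : Multigraph V) : ℕ :=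
  sInf {n | ∃ u v, G.Adj u v ∧ n = G.degree u + G.degree v - 2 * G.mult u v}

/-- A `λ`-fragment: a vertex set whose edge-boundary is a minimum edge-cut. -/
def IsFragment (G : Multigraph V) (A : Finset V) : Prop :=
  A.Nonempty ∧ Aᶜ.Nonempty ∧ G.IsEdgeCut (G.boundary A) ∧ G.cut A = G.edgeConn

/-- A `λ`-atom: a `λ`-fragment of minimum cardinality. -/
def IsAtom (G : Multigraph V) (A : Finset V) : Prop :=
  G.IsFragment A ∧ ∀ B : Finset V, G.IsFragment B → A.card ≤ B.card

/-- A strict `λ`-fragment: a `λ`-fragment `C` with `2 ≤ |C| ≤ |V| - 2`. -/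
def IsStrictFragment (G : Multigraph V) (A : Finset V) : Prop :=
  G.IsFragment A ∧ 2 ≤ A.card ∧ A.card ≤ Fintype.card V - 2

/-- A `λ`-superatom: a strict `λ`-fragment of minimum cardinality. -/
def IsSuperAtom (G : Multigraph V) (A : Finset V) : Prop :=
  G.IsStrictFragment A ∧ ∀ B : Finset V, G.IsStrictFragment B → A.card ≤ B.card

/-- A `λ'`-fragment: a vertex set whose edge-boundary is a minimum restricted edge-cut. -/
def IsRFragment (G : Multigraph V) (A : Finset V) : Prop :=
  G.IsRestrictedEdgeCut (G.boundary A) ∧ G.cut A = G.rEdgeConn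

/-- A `λ'`-atom: a `λ'`-fragment of minimum cardinality. -/
def IsRAtom (G : Multigraph V) (A : Finset V) : Prop :=
  G.IsRFragment A ∧ ∀ B : Finset V, G.IsRFragment B → A.card ≤ B.card

/-- `G` is super edge-connected if every minimum edge-cut is the set of all edges
incident with some vertex. -/
def IsSuperEdgeConnected (G : Multigraph V) : Prop :=
  ∀ F : G.EdgeSub, G.IsEdgeCut F → F.card = G.edgeConn →
    ∃ v : V, ∀ u w : V, F.f u w = if u = v ∨ w = v then G.mult u w else 0

end Fin

end Multigraph

variable {V : Type*} [Fintype V] [DecidableEq V]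

open Multigraph

/-!
Take an edge `uv` of maximum multiplicity `μ`. By semi-regularity every edge `xy` has
`d(x) + d(y) = d₁ + d₂`, so `ξ(G) = d₁ + d₂ - 2μ`. Let `A` consist of `u`, `v` and every vertex
whose neighbours all lie in `{u, v}`. Only `u` and `v` send edges out of `A`, so
`d(A) ≤ (d(u) - μ) + (d(v) - μ) = ξ(G)`, and every vertex keeps a neighbour on its own side.
It remains to find a vertex outside `A`. Otherwise, as `G` is not a star, some `w ≠ u` in `V₁`
hangs on `v` alone and some `w' ≠ v` in `V₂` hangs on `u` alone. Then
`d₁ = d(w) = μ(wv) ≤ μ ≤ d(u) = d₁`, so `u` has no neighbour but `v`, contradicting `uw'`.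
-/

namespace Multigraph

variable {α : Type*} {G : Multigraph α} {A : Finset α} {u v w : α}

theorem Adj.symm (h : G.Adj u v) : G.Adj v u := by
  rwa [Adj, G.symm]

theorem Adj.ne (h : G.Adj u v) : u ≠ v := by
  rintro rfl
  exact (h.trans_eq (G.loopless u)).false

theorem Reachable.exists_adj (h : G.Reachable u v) (hne : u ≠ v) : ∃ w, G.Adj u w := by
  rcases h.cases_head with rfl | ⟨w, hw, -⟩
  · exact absurd rfl hne
  · exact ⟨w, hw⟩

theorem Connected.exists_adj (hG : G.Connected) (huv : G.Adj u v) (x : α) : ∃ y, G.Adj x y := by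
  by_cases hx : x = u
  · exact ⟨v, hx ▸ huv⟩
  · exact (hG.2 x u).exists_adj hx

theorem adj_deleteEdges_boundary_iff [DecidableEq α] {x y : α} :
    (G.deleteEdges (G.boundary A)).Adj x y ↔ G.Adj x y ∧ (x ∈ A ↔ y ∈ A) := by
  simp only [Adj, deleteEdges, boundary]
  by_cases hx : x ∈ A <;> by_cases hy : y ∈ A <;> simp [hx, hy]

theorem Reachable.mem_iff_of_deleteEdges_boundary [DecidableEq α] {x y : α}
    (h : (G.deleteEdges (G.boundary A)).Reachable x y) : x ∈ A ↔ y ∈ A := by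
  induction h with
  | refl => rfl
  | tail _ hadj ih => exact ih.trans (adj_deleteEdges_boundary_iff.1 hadj).2

theorem isRestrictedEdgeCut_boundary [DecidableEq α] {a b : α} (ha : a ∈ A) (hb : b ∉ A)
    (hside : ∀ x, ∃ y, G.Adj x y ∧ (x ∈ A ↔ y ∈ A)) :
    G.IsRestrictedEdgeCut (G.boundary A) :=
  ⟨fun hconn => hb ((hconn.2 a b).mem_iff_of_deleteEdges_boundary.1 ha),
    fun x => (hside x).imp fun _ => adj_deleteEdges_boundary_iff.2⟩

theorem boundary_card [Fintype α] [DecidableEq α] (A : Finset α) :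
    (G.boundary A).card = G.cut A := by
  set g : α → α → ℕ := fun x y => if x ∈ A ∧ y ∉ A then G.mult x y else 0
  have hsplit : ∀ x y, (G.boundary A).f x y = g x y + g y x := by
    intro x y
    simp only [boundary, g, G.symm y x]
    by_cases hx : x ∈ A <;> by_cases hy : y ∈ A <;> simp [hx, hy]
  have hg : ∑ x, ∑ y, g x y = G.cut A := by
    rw [cut, ← Finset.sum_product', ← Finset.sum_filter, ← Finset.sum_product']
    congr 1
    ext ⟨x, y⟩
    simp
  simp only [EdgeSub.card, hsplit, Finset.sum_add_distrib]
  rw [Finset.sum_comm (f := fun x y => g y x), hg]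
  omega

theorem rEdgeConn_le_cut [Fintype α] [DecidableEq α]
    (h : G.IsRestrictedEdgeCut (G.boundary A)) : G.rEdgeConn ≤ G.cut A :=
  Nat.sInf_le ⟨_, h, boundary_card A⟩

section Degrees

variable [Fintype α]

theorem mult_le_degree (u v : α) : G.mult u v ≤ G.degree u :=
  Finset.single_le_sum (fun _ _ => Nat.zero_le _) (Finset.mem_univ v)

theorem mult_add_sum_erase_eq_degree [DecidableEq α] (u v : α) :
    G.mult u v + ∑ z ∈ Finset.univ.erase v, G.mult u z = G.degree u :=
  Finset.add_sum_erase _ _ (Finset.mem_univ v)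

theorem degree_eq_mult_of_forall_adj_eq (hw : ∀ x, G.Adj w x → x = v) :
    G.degree w = G.mult w v :=
  Finset.sum_eq_single_of_mem v (Finset.mem_univ v) fun z _ hz =>
    Nat.eq_zero_of_not_pos fun hwz => hz (hw z hwz)

theorem forall_adj_eq_of_degree_le [DecidableEq α] (hw : ∀ x, G.Adj w x → x = v)
    (hmult : G.mult w v ≤ G.mult u v) (hdeg : G.degree u ≤ G.degree w) :
    ∀ x, G.Adj u x → x = v := by
  have hrest : ∑ z ∈ Finset.univ.erase v, G.mult u z = 0 := by
    have := mult_add_sum_erase_eq_degree (G := G) u v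
    have := degree_eq_mult_of_forall_adj_eq hw
    omega
  intro x hux
  by_contra hxv
  exact hux.ne' (Finset.sum_eq_zero_iff.1 hrest x (Finset.mem_erase.2 ⟨hxv, Finset.mem_univ x⟩))

theorem sum_mult_compl_le [DecidableEq α] (hv : v ∈ A) (u : α) :
    ∑ z ∈ Aᶜ, G.mult u z ≤ G.degree u - G.mult u v := by
  have hsub : Aᶜ ⊆ Finset.univ.erase v := fun z hz =>
    Finset.mem_erase.2 ⟨fun h => Finset.mem_compl.1 hz (h ▸ hv), Finset.mem_univ z⟩
  have := Finset.sum_le_sum_of_subset (f := G.mult u) hsub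
  have := mult_add_sum_erase_eq_degree (G := G) u v
  omega

theorem cut_le_of_forall_mult_eq_zero [DecidableEq α] (hu : u ∈ A) (hv : v ∈ A) (hne : u ≠ v)
    (hA : ∀ a ∈ A, a ≠ u → a ≠ v → ∀ z ∉ A, G.mult a z = 0) :
    G.cut A ≤ (G.degree u - G.mult u v) + (G.degree v - G.mult v u) := by
  have hpair : G.cut A = ∑ a ∈ {u, v}, ∑ z ∈ Aᶜ, G.mult a z := by
    refine (Finset.sum_subset (by simp [Finset.insert_subset_iff, hu, hv]) ?_).symm
    intro a ha hauv
    simp only [Finset.mem_insert, Finset.mem_singleton, not_or] at hauv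
    exact Finset.sum_eq_zero fun z hz => hA a ha hauv.1 hauv.2 z (Finset.mem_compl.1 hz)
  rw [hpair, Finset.sum_pair hne]
  exact add_le_add (sum_mult_compl_le hv u) (sum_mult_compl_le hu v)

theorem le_minEdgeDegree {n : ℕ} (huv : G.Adj u v)
    (h : ∀ x y, G.Adj x y → n ≤ G.degree x + G.degree y - 2 * G.mult x y) :
    n ≤ G.minEdgeDegree :=
  le_csInf ⟨_, u, v, huv, rfl⟩ fun _ ⟨x, y, hxy, hn⟩ => hn ▸ h x y hxy

end Degrees

section PendantClosure

variable [Fintype α] [DecidableEq α]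

def pendantClosure (G : Multigraph α) (u v : α) : Finset α :=
  {w | w = u ∨ w = v ∨ ∀ x, G.Adj w x → x = u ∨ x = v}

theorem mem_pendantClosure :
    w ∈ G.pendantClosure u v ↔ w = u ∨ w = v ∨ ∀ x, G.Adj w x → x = u ∨ x = v := by
  simp [pendantClosure]

theorem left_mem_pendantClosure : u ∈ G.pendantClosure u v :=
  mem_pendantClosure.2 (Or.inl rfl)

theorem right_mem_pendantClosure : v ∈ G.pendantClosure u v :=
  mem_pendantClosure.2 (Or.inr (Or.inl rfl))

theorem pendantClosure_comm : G.pendantClosure u v = G.pendantClosure v u := by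
  ext w
  simp only [mem_pendantClosure, or_comm, or_left_comm]

theorem mult_eq_zero_of_mem_pendantClosure {a z : α} (ha : a ∈ G.pendantClosure u v)
    (hau : a ≠ u) (hav : a ≠ v) (hz : z ∉ G.pendantClosure u v) : G.mult a z = 0 := by
  simp only [mem_pendantClosure, not_or] at ha hz
  rcases ha with rfl | rfl | ha
  · exact absurd rfl hau
  · exact absurd rfl hav
  · exact Nat.eq_zero_of_not_pos fun haz => (ha z haz).elim hz.1 hz.2.1

theorem Connected.exists_adj_mem_pendantClosure_iff (hG : G.Connected) (huv : G.Adj u v)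
    (x : α) : ∃ y, G.Adj x y ∧ (x ∈ G.pendantClosure u v ↔ y ∈ G.pendantClosure u v) := by
  by_cases hx : x ∈ G.pendantClosure u v
  · rcases mem_pendantClosure.1 hx with rfl | rfl | hxN
    · exact ⟨v, huv, iff_of_true hx right_mem_pendantClosure⟩
    · exact ⟨u, huv.symm, iff_of_true hx left_mem_pendantClosure⟩
    · obtain ⟨y, hxy⟩ := hG.exists_adj huv x
      refine ⟨y, hxy, iff_of_true hx ?_⟩
      rcases hxN y hxy with rfl | rfl
      exacts [left_mem_pendantClosure, right_mem_pendantClosure]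
  · have hx' := hx
    simp only [mem_pendantClosure, not_or, not_forall] at hx'
    obtain ⟨hxu, hxv, y, hxy, hyu, hyv⟩ := hx'
    refine ⟨y, hxy, iff_of_false hx ?_⟩
    simp only [mem_pendantClosure, not_or, not_forall]
    exact ⟨hyu, hyv, x, hxy.symm, hxu, hxv⟩

theorem cut_pendantClosure_le (huv : G.Adj u v) :
    G.cut (G.pendantClosure u v) ≤ (G.degree u - G.mult u v) + (G.degree v - G.mult v u) :=
  cut_le_of_forall_mult_eq_zero left_mem_pendantClosure right_mem_pendantClosure huv.ne
    fun _ ha hau hav _ hz => mult_eq_zero_of_mem_pendantClosure ha hau hav hz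

end PendantClosure

namespace IsBipartition

variable [Fintype α] [DecidableEq α] {V₁ V₂ : Finset α} {x y : α}

theorem symm (hbip : G.IsBipartition V₁ V₂) : G.IsBipartition V₂ V₁ :=
  ⟨hbip.1.symm, Finset.union_comm V₁ V₂ ▸ hbip.2.1, fun x y hxy => (hbip.2.2 y x hxy.symm).symm⟩

theorem mem_or_mem (hbip : G.IsBipartition V₁ V₂) (x : α) : x ∈ V₁ ∨ x ∈ V₂ :=
  Finset.mem_union.1 (hbip.2.1 ▸ Finset.mem_univ x)

theorem notMem_right (hbip : G.IsBipartition V₁ V₂) (hx : x ∈ V₁) : x ∉ V₂ :=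
  Finset.disjoint_left.1 hbip.1 hx

theorem mem_right_of_adj (hbip : G.IsBipartition V₁ V₂) (hxy : G.Adj x y) (hx : x ∈ V₁) :
    y ∈ V₂ :=
  (hbip.2.2 x y hxy).1 hx

theorem degree_add_degree {d₁ d₂ : ℕ} (hbip : G.IsBipartition V₁ V₂)
    (hd1 : ∀ v ∈ V₁, G.degree v = d₁) (hd2 : ∀ v ∈ V₂, G.degree v = d₂) (hxy : G.Adj x y) :
    G.degree x + G.degree y = d₁ + d₂ := by
  rcases hbip.mem_or_mem x with hx | hx
  · rw [hd1 x hx, hd2 y (hbip.mem_right_of_adj hxy hx)]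
  · rw [hd2 x hx, hd1 y (hbip.symm.mem_right_of_adj hxy hx), add_comm]

theorem exists_adj_forall_mult_le (hbip : G.IsBipartition V₁ V₂) (hxy : G.Adj x y) :
    ∃ u ∈ V₁, ∃ v ∈ V₂, G.Adj u v ∧ ∀ x y, G.mult x y ≤ G.mult u v := by
  obtain ⟨⟨u, v⟩, -, hmax⟩ := Finset.exists_max_image Finset.univ
    (fun p : α × α => G.mult p.1 p.2) ⟨(x, y), Finset.mem_univ _⟩
  replace hmax : ∀ x y, G.mult x y ≤ G.mult u v := fun x y => hmax (x, y) (Finset.mem_univ _)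
  have huv : G.Adj u v := hxy.trans_le (hmax x y)
  rcases hbip.mem_or_mem u with hu | hu
  · exact ⟨u, hu, v, hbip.mem_right_of_adj huv hu, huv, hmax⟩
  · exact ⟨v, hbip.symm.mem_right_of_adj huv hu, u, hu, huv.symm,
      fun x y => (hmax x y).trans_eq (G.symm u v)⟩

theorem exists_pendant_of_forall_mem_pendantClosure (hbip : G.IsBipartition V₁ V₂)
    (hu : u ∈ V₁) (hv : v ∈ V₂) (hall : ∀ w, w ∈ G.pendantClosure u v)
    (hstar : ¬ ∀ x y, G.Adj x y → x = u ∨ y = u) :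
    ∃ w ∈ V₁, w ≠ u ∧ ∀ x, G.Adj w x → x = v := by
  simp only [not_forall, not_or] at hstar
  obtain ⟨x, y, hxy, hxu, hyu⟩ := hstar
  obtain ⟨w, hw, hwu⟩ : ∃ w ∈ V₁, w ≠ u := by
    rcases hbip.mem_or_mem x with hx | hx
    exacts [⟨x, hx, hxu⟩, ⟨y, hbip.symm.mem_right_of_adj hxy hx, hyu⟩]
  refine ⟨w, hw, hwu, fun z hwz => ?_⟩
  rcases mem_pendantClosure.1 (hall w) with rfl | rfl | hwN
  · exact absurd rfl hwu
  · exact absurd hv (hbip.notMem_right hw)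
  · exact (hwN z hwz).resolve_left fun hzu =>
      hbip.notMem_right hu (hzu ▸ hbip.mem_right_of_adj hwz hw)

theorem exists_notMem_pendantClosure {d₁ : ℕ} (hbip : G.IsBipartition V₁ V₂)
    (hd1 : ∀ v ∈ V₁, G.degree v = d₁) (hG : G.Connected)
    (hstar : ¬ ∃ c, ∀ x y, G.Adj x y → x = c ∨ y = c) (hu : u ∈ V₁) (hv : v ∈ V₂)
    (huv : G.Adj u v) (hmax : ∀ x y, G.mult x y ≤ G.mult u v) :
    ∃ b, b ∉ G.pendantClosure u v := by
  by_contra! hall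
  obtain ⟨w₁, hw₁, -, hw₁N⟩ :=
    hbip.exists_pendant_of_forall_mem_pendantClosure hu hv hall fun h => hstar ⟨u, h⟩
  obtain ⟨w₂, -, hw₂v, hw₂N⟩ := hbip.symm.exists_pendant_of_forall_mem_pendantClosure hv hu
    (pendantClosure_comm (G := G) ▸ hall) fun h => hstar ⟨v, h⟩
  have huN : ∀ x, G.Adj u x → x = v :=
    forall_adj_eq_of_degree_le hw₁N (hmax w₁ v) (by rw [hd1 u hu, hd1 w₁ hw₁])
  obtain ⟨x, hw₂x⟩ := hG.exists_adj huv w₂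
  rw [hw₂N x hw₂x] at hw₂x
  exact hw₂v (huN w₂ hw₂x.symm)

end IsBipartition

end Multigraph

theorem rEdgeConn_le_minEdgeDegree_of_semiRegular_general (G : Multigraph V) (V₁ V₂ : Finset V)
    (d₁ d₂ : ℕ) (hbip : G.IsBipartition V₁ V₂)
    (hd1 : ∀ v ∈ V₁, G.degree v = d₁) (hd2 : ∀ v ∈ V₂, G.degree v = d₂)
    (hG : G.Connected)
    (hstar : ¬ ∃ c : V, ∀ u v : V, G.Adj u v → u = c ∨ v = c) :
    (∃ F : G.EdgeSub, G.IsRestrictedEdgeCut F) ∧ G.rEdgeConn ≤ G.minEdgeDegree := by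
  obtain ⟨a, b, hab⟩ : ∃ a b, G.Adj a b := by
    by_contra! hnone
    exact hstar ⟨Classical.choice hG.1, fun a b hab => absurd hab (hnone a b)⟩
  obtain ⟨u, hu, v, hv, huv, hmax⟩ := hbip.exists_adj_forall_mult_le hab
  obtain ⟨c, hc⟩ := hbip.exists_notMem_pendantClosure hd1 hG hstar hu hv huv hmax
  have hcut : G.IsRestrictedEdgeCut (G.boundary (G.pendantClosure u v)) :=
    isRestrictedEdgeCut_boundary left_mem_pendantClosure hc
      (hG.exists_adj_mem_pendantClosure_iff huv)
  refine ⟨⟨_, hcut⟩, ?_⟩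
  calc G.rEdgeConn ≤ G.cut (G.pendantClosure u v) := rEdgeConn_le_cut hcut
    _ ≤ (G.degree u - G.mult u v) + (G.degree v - G.mult v u) := cut_pendantClosure_le huv
    _ ≤ G.minEdgeDegree := le_minEdgeDegree huv fun x y hxy => by
      have := hbip.degree_add_degree hd1 hd2 hxy
      have := hbip.degree_add_degree hd1 hd2 huv
      have := mult_le_degree (G := G) u v
      have := mult_le_degree (G := G) v u
      have := G.symm v u
      have := hmax x y
      omega

/-- For a connected semi-regular bipartite multigraph on at least four vertices whose
underlying simple graph is not a star, a restricted edge-cut exists and `λ'(G) ≤ ξ(G)`. -/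
theorem rEdgeConn_le_minEdgeDegree_of_semiRegular (G : Multigraph V) (V₁ V₂ : Finset V)
    (d₁ d₂ : ℕ) (hbip : G.IsBipartition V₁ V₂)
    (hd1 : ∀ v ∈ V₁, G.degree v = d₁) (hd2 : ∀ v ∈ V₂, G.degree v = d₂)
    (hG : G.Connected) (h4 : 4 ≤ Fintype.card V)
    (hstar : ¬ ∃ c : V, ∀ u v : V, G.Adj u v → u = c ∨ v = c) :
    (∃ F : G.EdgeSub, G.IsRestrictedEdgeCut F) ∧ G.rEdgeConn ≤ G.minEdgeDegree :=
  rEdgeConn_le_minEdgeDegree_of_semiRegular_general G V₁ V₂ d₁ d₂ hbip hd1 hd2 hG hstar
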